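/- arXiv:2205.13531 — 4 statements merged into one kernel-verified Lean document; each statement's English description precedes it below -/
import Mathlib

section
/- Let L ∈ N, q ∈ [2,∞], c > 0, and N_0,…,N_L ∈ N. Any ReLU network realization R(Φ) with architecture (N_0,…,N_L) whose weight matrices satisfy ‖W^i‖_{ℓ^q} ≤ c for all i is Lipschitz with respect to the Euclidean norm with Lipschitz constant at most c^L · (√(N_0 N_L) · N_1 ⋯ N_{L−1})^{1−2/q}. -/
open scoped ENNReal

/-- Euclidean (ℓ²) norm of a vector in `Fin n → ℝ`. -/
noncomputable def enorm2 {n : ℕ} (x : Fin n → ℝ) : ℝ :=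
  Real.sqrt (∑ i, (x i) ^ 2)

/-- Entrywise ℓ^q norm of a matrix, for `q ∈ [1,∞]` (max of absolute entries for `q = ∞`). -/
noncomputable def matLqNorm {N M : ℕ} (q : ℝ≥0∞) (W : Matrix (Fin N) (Fin M) ℝ) : ℝ :=
  if q = ∞ then ⨆ i, ⨆ j, |W i j|
  else (∑ i, ∑ j, |W i j| ^ q.toReal) ^ (1 / q.toReal)

/-- Hidden-layer outputs of a ReLU network. -/
noncomputable def layers (N : ℕ → ℕ)
    (W : (i : ℕ) → Matrix (Fin (N (i + 1))) (Fin (N i)) ℝ)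
    (b : (i : ℕ) → Fin (N (i + 1)) → ℝ) :
    (ℓ : ℕ) → (Fin (N 0) → ℝ) → (Fin (N ℓ) → ℝ)
  | 0 => fun x => x
  | (ℓ + 1) => fun x j => max 0 ((W ℓ).mulVec (layers N W b ℓ x) j + b ℓ j)

/-- Realization of a ReLU network with `L` layers (no ReLU on the last layer). -/
noncomputable def realize (N : ℕ → ℕ)
    (W : (i : ℕ) → Matrix (Fin (N (i + 1))) (Fin (N i)) ℝ)
    (b : (i : ℕ) → Fin (N (i + 1)) → ℝ) (L : ℕ) (x : Fin (N 0) → ℝ) :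
    Fin (N L) → ℝ :=
  match L with
  | 0 => x
  | (ℓ + 1) => fun j => (W ℓ).mulVec (layers N W b ℓ x) j + b ℓ j

lemma enorm2_nonneg {n : ℕ} (x : Fin n → ℝ) : 0 ≤ enorm2 x := Real.sqrt_nonneg _

lemma enorm2_mono {n : ℕ} {u v : Fin n → ℝ} (h : ∀ j, |u j| ≤ |v j|) :
    enorm2 u ≤ enorm2 v := by
  refine Real.sqrt_le_sqrt (Finset.sum_le_sum fun j _ => ?_)
  rw [← sq_abs (u j), ← sq_abs (v j)]
  exact pow_le_pow_left₀ (abs_nonneg _) (h j) 2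

lemma frob_mulVec {n m : ℕ} (W : Matrix (Fin n) (Fin m) ℝ) (x : Fin m → ℝ) :
    enorm2 (W.mulVec x) ≤ Real.sqrt (∑ i, ∑ j, W i j ^ 2) * enorm2 x := by
  rw [enorm2, enorm2, ← Real.sqrt_mul (by positivity), Finset.sum_mul]
  refine Real.sqrt_le_sqrt (Finset.sum_le_sum fun i _ => ?_)
  simpa [Matrix.mulVec, dotProduct] using
    Finset.sum_mul_sq_le_sq_mul_sq Finset.univ (W i) x

lemma frob_le {n m : ℕ} {q : ℝ≥0∞} (hq : 2 ≤ q) {c : ℝ} (hc : 0 ≤ c)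
    {W : Matrix (Fin n) (Fin m) ℝ} (h : matLqNorm q W ≤ c) :
    Real.sqrt (∑ i, ∑ j, W i j ^ 2)
      ≤ ((n : ℝ) * m) ^ ((1:ℝ)/2 - 1/q.toReal) * c := by
  have hnm : (0:ℝ) ≤ (n : ℝ) * m := by positivity
  by_cases hqi : q = ∞
  · subst hqi
    have hent : ∀ i j, |W i j| ≤ c := by
      intro i j
      have h1 : |W i j| ≤ ⨆ j, |W i j| :=
        le_ciSup (f := fun j => |W i j|) (Set.Finite.bddAbove (Set.finite_range _)) j
      have h2 : (⨆ j, |W i j|) ≤ ⨆ i, ⨆ j, |W i j| :=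
        le_ciSup (f := fun i => ⨆ j, |W i j|) (Set.Finite.bddAbove (Set.finite_range _)) i
      calc |W i j| ≤ _ := h1
        _ ≤ _ := h2
        _ ≤ c := by simpa [matLqNorm] using h
    have hsum : (∑ i, ∑ j, W i j ^ 2) ≤ (n : ℝ) * m * c ^ 2 := by
      calc (∑ i : Fin n, ∑ j : Fin m, W i j ^ 2)
          ≤ ∑ _i : Fin n, ∑ _j : Fin m, c ^ 2 := by
            refine Finset.sum_le_sum fun i _ => Finset.sum_le_sum fun j _ => ?_
            rw [← sq_abs]
            exact pow_le_pow_left₀ (abs_nonneg _) (hent i j) 2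
        _ = (n : ℝ) * m * c ^ 2 := by
            simp [Finset.sum_const, mul_assoc]
    calc Real.sqrt (∑ i, ∑ j, W i j ^ 2) ≤ Real.sqrt ((n : ℝ) * m * c ^ 2) :=
          Real.sqrt_le_sqrt hsum
      _ = Real.sqrt ((n : ℝ) * m) * c := by
          rw [Real.sqrt_mul hnm, Real.sqrt_sq hc]
      _ = ((n : ℝ) * m) ^ ((1:ℝ)/2 - 1/(∞ : ℝ≥0∞).toReal) * c := by
          rw [Real.sqrt_eq_rpow]; norm_num
  · set p := q.toReal with hpdef
    have hp2 : (2 : ℝ) ≤ p := by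
      have := ENNReal.toReal_mono hqi hq
      simpa using this
    have hp0 : (0:ℝ) < p := by linarith
    set T : ℝ := ∑ k : Fin n × Fin m, |W k.1 k.2| ^ p with hT
    have hT0 : 0 ≤ T := Finset.sum_nonneg fun k _ =>
      Real.rpow_nonneg (abs_nonneg _) _
    have holder := Real.inner_le_weight_mul_Lp_of_nonneg
      (Finset.univ : Finset (Fin n × Fin m)) (p := p / 2) (by linarith)
      (fun _ => 1) (fun k => |W k.1 k.2| ^ (2:ℕ))
      (fun _ => zero_le_one) (fun k => by positivity)
    simp only [one_mul] at holder
    have e1 : ∀ k : Fin n × Fin m, (|W k.1 k.2| ^ (2:ℕ)) ^ (p/2) = |W k.1 k.2| ^ p := by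
      intro k
      rw [← Real.rpow_natCast (|W k.1 k.2|) 2, ← Real.rpow_mul (abs_nonneg _)]
      congr 1
      ring
    have hcard : (∑ _k : Fin n × Fin m, (1:ℝ)) = (n : ℝ) * m := by
      simp [Finset.sum_const, Fintype.card_prod]
    have hS2 : (∑ i, ∑ j, W i j ^ 2) = ∑ k : Fin n × Fin m, |W k.1 k.2| ^ (2:ℕ) := by
      rw [Fintype.sum_prod_type]
      simp [sq_abs]
    have key : (∑ i, ∑ j, W i j ^ 2) ≤ ((n:ℝ) * m) ^ (1 - 2/p) * T ^ ((2:ℝ)/p) := by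
      rw [hS2]
      calc (∑ k : Fin n × Fin m, |W k.1 k.2| ^ (2:ℕ))
          ≤ (∑ _k : Fin n × Fin m, (1:ℝ)) ^ (1 - (p/2)⁻¹)
              * (∑ k : Fin n × Fin m, (|W k.1 k.2| ^ (2:ℕ)) ^ (p/2)) ^ (p/2)⁻¹ := holder
        _ = ((n:ℝ) * m) ^ (1 - 2/p) * T ^ ((2:ℝ)/p) := by
            have hinv : (p/2)⁻¹ = 2/p := by rw [inv_div]
            have hTeq : (∑ k : Fin n × Fin m, (|W k.1 k.2| ^ (2:ℕ)) ^ (p/2)) = T :=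
              Finset.sum_congr rfl fun k _ => e1 k
            rw [hcard, hinv, hTeq]
    have hmatLq : matLqNorm q W = T ^ ((1:ℝ)/p) := by
      rw [hT, Fintype.sum_prod_type, matLqNorm, if_neg hqi, ← hpdef]
    have hTp : 0 ≤ T ^ ((1:ℝ)/p) := Real.rpow_nonneg hT0 _
    calc Real.sqrt (∑ i, ∑ j, W i j ^ 2)
        ≤ Real.sqrt (((n:ℝ) * m) ^ (1 - 2/p) * T ^ ((2:ℝ)/p)) := Real.sqrt_le_sqrt key
      _ = ((n:ℝ) * m) ^ ((1:ℝ)/2 - 1/p) * T ^ ((1:ℝ)/p) := by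
          rw [Real.sqrt_mul (Real.rpow_nonneg hnm _), Real.sqrt_eq_rpow,
            Real.sqrt_eq_rpow, ← Real.rpow_mul hnm, ← Real.rpow_mul hT0]
          congr 1
          · congr 1; ring
          · congr 1; field_simp
      _ ≤ ((n:ℝ) * m) ^ ((1:ℝ)/2 - 1/p) * c := by
          apply mul_le_mul_of_nonneg_left _ (Real.rpow_nonneg hnm _)
          rw [← hmatLq]; exact h

lemma layers_diff_le (N : ℕ → ℕ)
    (W : (i : ℕ) → Matrix (Fin (N (i + 1))) (Fin (N i)) ℝ)
    (b : (i : ℕ) → Fin (N (i + 1)) → ℝ) (x y : Fin (N 0) → ℝ) :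
    ∀ ℓ : ℕ, enorm2 (fun j => layers N W b ℓ x j - layers N W b ℓ y j)
      ≤ (∏ i ∈ Finset.range ℓ, Real.sqrt (∑ r, ∑ s, W i r s ^ 2))
          * enorm2 (fun j => x j - y j) := by
  intro ℓ
  induction ℓ with
  | zero => simp [layers]
  | succ ℓ ih =>
      have F0 : ∀ i, 0 ≤ Real.sqrt (∑ r, ∑ s, W i r s ^ 2) := fun i => Real.sqrt_nonneg _
      have step1 : enorm2 (fun j => layers N W b (ℓ+1) x j - layers N W b (ℓ+1) y j)
          ≤ enorm2 ((W ℓ).mulVec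
              (fun j => layers N W b ℓ x j - layers N W b ℓ y j)) := by
        apply enorm2_mono
        intro j
        have : (W ℓ).mulVec (fun j => layers N W b ℓ x j - layers N W b ℓ y j) j
            = (W ℓ).mulVec (layers N W b ℓ x) j - (W ℓ).mulVec (layers N W b ℓ y) j := by
          simp [Matrix.mulVec, dotProduct, mul_sub, Finset.sum_sub_distrib]
        rw [this]
        show |max 0 _ - max 0 _| ≤ _
        calc |max 0 ((W ℓ).mulVec (layers N W b ℓ x) j + b ℓ j)
              - max 0 ((W ℓ).mulVec (layers N W b ℓ y) j + b ℓ j)|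
            = |max ((W ℓ).mulVec (layers N W b ℓ x) j + b ℓ j) 0
              - max ((W ℓ).mulVec (layers N W b ℓ y) j + b ℓ j) 0| := by
              rw [max_comm, max_comm ((W ℓ).mulVec (layers N W b ℓ y) j + b ℓ j) 0]
          _ ≤ |((W ℓ).mulVec (layers N W b ℓ x) j + b ℓ j)
              - ((W ℓ).mulVec (layers N W b ℓ y) j + b ℓ j)| := abs_max_sub_max_le_abs _ _ _
          _ = |(W ℓ).mulVec (layers N W b ℓ x) j - (W ℓ).mulVec (layers N W b ℓ y) j| := by
              ring_nf
      calc enorm2 (fun j => layers N W b (ℓ+1) x j - layers N W b (ℓ+1) y j)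
          ≤ enorm2 ((W ℓ).mulVec (fun j => layers N W b ℓ x j - layers N W b ℓ y j)) := step1
        _ ≤ Real.sqrt (∑ r, ∑ s, W ℓ r s ^ 2)
              * enorm2 (fun j => layers N W b ℓ x j - layers N W b ℓ y j) := frob_mulVec _ _
        _ ≤ Real.sqrt (∑ r, ∑ s, W ℓ r s ^ 2)
              * ((∏ i ∈ Finset.range ℓ, Real.sqrt (∑ r, ∑ s, W i r s ^ 2))
                  * enorm2 (fun j => x j - y j)) :=
            mul_le_mul_of_nonneg_left ih (F0 ℓ)
        _ = (∏ i ∈ Finset.range (ℓ+1), Real.sqrt (∑ r, ∑ s, W i r s ^ 2))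
              * enorm2 (fun j => x j - y j) := by
            rw [Finset.prod_range_succ]; ring

/-- for `q ∈ [2,∞]`, a ReLU network with architecture `(N₀,…,N_L)` whose
weight matrices all have entrywise ℓ^q norm at most `c` is Lipschitz w.r.t. the
Euclidean norm with constant `c^L · (√(N₀ N_L) · N₁ ⋯ N_{L-1})^{1-2/q}`
(for `q = ∞` the exponent is `1`, via `q.toReal = 0` and `2/0 = 0`). -/
theorem network_lipschitz_big_q (L : ℕ) (hL : 1 ≤ L) (q : ℝ≥0∞) (c : ℝ)
    (hq : 2 ≤ q) (hc : 0 < c) (N : ℕ → ℕ)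
    (W : (i : ℕ) → Matrix (Fin (N (i + 1))) (Fin (N i)) ℝ)
    (b : (i : ℕ) → Fin (N (i + 1)) → ℝ)
    (hW : ∀ i < L, matLqNorm q (W i) ≤ c)
    (x y : Fin (N 0) → ℝ) :
    enorm2 (fun j => realize N W b L x j - realize N W b L y j)
      ≤ c ^ L *
          (Real.sqrt ((N 0 : ℝ) * N L) * ∏ i ∈ Finset.range (L - 1), (N (i + 1) : ℝ))
            ^ (1 - 2 / q.toReal)
        * enorm2 (fun j => x j - y j) := by
  obtain ⟨ℓ, rfl⟩ : ∃ ℓ, L = ℓ + 1 := ⟨L - 1, (Nat.succ_pred_eq_of_pos hL).symm⟩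
  have F0 : ∀ i, 0 ≤ Real.sqrt (∑ r, ∑ s, W i r s ^ 2) := fun i => Real.sqrt_nonneg _
  -- Step 1: Lipschitz bound with product of Frobenius norms
  have step1 : enorm2 (fun j => realize N W b (ℓ+1) x j - realize N W b (ℓ+1) y j)
      ≤ (∏ i ∈ Finset.range (ℓ+1), Real.sqrt (∑ r, ∑ s, W i r s ^ 2))
          * enorm2 (fun j => x j - y j) := by
    have hrw : (fun j => realize N W b (ℓ+1) x j - realize N W b (ℓ+1) y j)
        = (W ℓ).mulVec (fun j => layers N W b ℓ x j - layers N W b ℓ y j) := by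
      funext j
      simp only [realize, Matrix.mulVec, dotProduct, mul_sub,
        Finset.sum_sub_distrib]
      ring
    rw [hrw]
    calc enorm2 ((W ℓ).mulVec (fun j => layers N W b ℓ x j - layers N W b ℓ y j))
        ≤ Real.sqrt (∑ r, ∑ s, W ℓ r s ^ 2)
            * enorm2 (fun j => layers N W b ℓ x j - layers N W b ℓ y j) := frob_mulVec _ _
      _ ≤ Real.sqrt (∑ r, ∑ s, W ℓ r s ^ 2)
            * ((∏ i ∈ Finset.range ℓ, Real.sqrt (∑ r, ∑ s, W i r s ^ 2))
                * enorm2 (fun j => x j - y j)) :=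
          mul_le_mul_of_nonneg_left (layers_diff_le N W b x y ℓ) (F0 ℓ)
      _ = (∏ i ∈ Finset.range (ℓ+1), Real.sqrt (∑ r, ∑ s, W i r s ^ 2))
            * enorm2 (fun j => x j - y j) := by
          rw [Finset.prod_range_succ]; ring
  -- Step 2: bound each Frobenius norm
  set e : ℝ := (1:ℝ)/2 - 1/q.toReal with he
  have step2 : (∏ i ∈ Finset.range (ℓ+1), Real.sqrt (∑ r, ∑ s, W i r s ^ 2))
      ≤ ∏ i ∈ Finset.range (ℓ+1), (((N (i+1) : ℝ)) * (N i : ℝ)) ^ e * c :=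
    Finset.prod_le_prod (fun i _ => F0 i)
      (fun i hi => frob_le hq hc.le (hW i (Finset.mem_range.mp hi)))
  -- Step 3: rewrite the product
  have hPnn : (0:ℝ) ≤ ∏ i ∈ Finset.range ℓ, (N (i + 1) : ℝ) :=
    Finset.prod_nonneg fun i _ => Nat.cast_nonneg _
  have hAnn : (0:ℝ) ≤ Real.sqrt ((N 0 : ℝ) * N (ℓ+1))
      * ∏ i ∈ Finset.range ℓ, (N (i + 1) : ℝ) := mul_nonneg (Real.sqrt_nonneg _) hPnn
  have step3 : (∏ i ∈ Finset.range (ℓ+1), (((N (i+1) : ℝ)) * (N i : ℝ)) ^ e * c)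
      = c ^ (ℓ+1) *
          (Real.sqrt ((N 0 : ℝ) * N (ℓ+1)) * ∏ i ∈ Finset.range ℓ, (N (i + 1) : ℝ))
            ^ (1 - 2 / q.toReal) := by
    rw [Finset.prod_mul_distrib, Finset.prod_const, Finset.card_range,
      Real.finset_prod_rpow _ _ (fun i _ => by positivity) e]
    have hprod : (∏ i ∈ Finset.range (ℓ+1), ((N (i+1) : ℝ)) * (N i : ℝ))
        = ((N 0 : ℝ) * N (ℓ+1)) * (∏ i ∈ Finset.range ℓ, (N (i + 1) : ℝ)) ^ 2 := by
      rw [Finset.prod_mul_distrib, Finset.prod_range_succ, Finset.prod_range_succ']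
      ring
    rw [hprod]
    have hA2 : ((N 0 : ℝ) * N (ℓ+1)) * (∏ i ∈ Finset.range ℓ, (N (i + 1) : ℝ)) ^ 2
        = (Real.sqrt ((N 0 : ℝ) * N (ℓ+1)) * ∏ i ∈ Finset.range ℓ, (N (i + 1) : ℝ)) ^ 2 := by
      rw [mul_pow, Real.sq_sqrt (by positivity)]
    rw [hA2, ← Real.rpow_natCast (Real.sqrt ((N 0 : ℝ) * N (ℓ+1))
      * ∏ i ∈ Finset.range ℓ, (N (i + 1) : ℝ)) 2, ← Real.rpow_mul hAnn, he,
      show ((2:ℕ):ℝ) * ((1:ℝ)/2 - 1/q.toReal) = 1 - 2/q.toReal by push_cast; ring]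
    ring
  -- Combine
  calc enorm2 (fun j => realize N W b (ℓ+1) x j - realize N W b (ℓ+1) y j)
      ≤ (∏ i ∈ Finset.range (ℓ+1), Real.sqrt (∑ r, ∑ s, W i r s ^ 2))
          * enorm2 (fun j => x j - y j) := step1
    _ ≤ (∏ i ∈ Finset.range (ℓ+1), (((N (i+1) : ℝ)) * (N i : ℝ)) ^ e * c)
          * enorm2 (fun j => x j - y j) :=
        mul_le_mul_of_nonneg_right step2 (enorm2_nonneg _)
    _ = c ^ (ℓ+1) *
          (Real.sqrt ((N 0 : ℝ) * N (ℓ+1)) * ∏ i ∈ Finset.range ((ℓ+1) - 1), (N (i + 1) : ℝ))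
            ^ (1 - 2 / q.toReal)
          * enorm2 (fun j => x j - y j) := by rw [Nat.add_sub_cancel, step3]
end

section
/- For every d, m ∈ N there exist points x_1,…,x_m ∈ [0,1]^d and a map Θ_m: R^m → L^∞([0,1]^d) such that for every Lipschitz function u: [0,1]^d → R (with respect to the Euclidean norm), ‖Θ_m(u(x_1),…,u(x_m)) − u‖_{L^∞([0,1]^d)} ≤ Lip_{ℓ²}(u) · 2√d · m^{−1/d}. -/
lemma near_digit (k : ℕ) (hk : 1 ≤ k) (t : ℝ) (ht0 : 0 ≤ t) (ht1 : t ≤ 1) :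
    |t - (min (Nat.floor (t * k)) (k - 1) : ℕ) / (k : ℝ)| ≤ 1 / k := by
  have hkR : (0:ℝ) < k := by exact_mod_cast hk
  rcases le_or_gt (Nat.floor (t * k)) (k - 1) with h | h
  · rw [min_eq_left h]
    have h1 : (Nat.floor (t * k) : ℝ) ≤ t * k := Nat.floor_le (by positivity)
    have h2 : t * k < Nat.floor (t * k) + 1 := Nat.lt_floor_add_one _
    have e1 : t - (Nat.floor (t * k) : ℝ) / k = (t * k - Nat.floor (t * k)) / k := by
      field_simp
    rw [e1, abs_div, abs_of_pos hkR]
    gcongr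
    rw [abs_le]; constructor <;> nlinarith
  · rw [min_eq_right h.le]
    have hk2 : k ≤ Nat.floor (t * k) := by omega
    have hle : (k : ℝ) ≤ t * k := by
      have := Nat.floor_le (mul_nonneg ht0 hkR.le)
      exact_mod_cast le_trans (by exact_mod_cast hk2) this
    have ht : t = 1 := le_antisymm ht1 (by nlinarith)
    subst ht
    have hc : ((k - 1 : ℕ) : ℝ) = (k:ℝ) - 1 := by
      push_cast [Nat.cast_sub hk]; ring
    rw [hc]
    have : 1 - ((k:ℝ) - 1) / k = 1 / k := by field_simp; ring
    rw [this, abs_of_pos (by positivity)]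

/-- there exist points `x₁,…,x_m ∈ [0,1]^d` and a reconstruction map
`Θ_m : ℝ^m → (functions on [0,1]^d)` such that every function `u` on `[0,1]^d`
that is `K`-Lipschitz w.r.t. the Euclidean norm is reconstructed with uniform error
at most `K · 2√d · m^{-1/d}`. -/
theorem lipschitz_recovery_from_samples (d m : ℕ) (hd : 0 < d) (hm : 0 < m) :
    ∃ (x : Fin m → (Fin d → ℝ)) (Θ : (Fin m → ℝ) → ((Fin d → ℝ) → ℝ)),
      (∀ i, x i ∈ Set.Icc (0 : Fin d → ℝ) 1) ∧
      ∀ (u : (Fin d → ℝ) → ℝ) (K : ℝ), 0 ≤ K →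
        (∀ a ∈ Set.Icc (0 : Fin d → ℝ) 1, ∀ b ∈ Set.Icc (0 : Fin d → ℝ) 1,
          |u a - u b| ≤ K * enorm2 (fun i => a i - b i)) →
        ∀ z ∈ Set.Icc (0 : Fin d → ℝ) 1,
          |Θ (fun i => u (x i)) z - u z|
            ≤ K * 2 * Real.sqrt d * (m : ℝ) ^ (-(1 : ℝ) / d) := by
  have hdR : (0:ℝ) < d := by exact_mod_cast hd
  have hm1 : (1:ℝ) ≤ (m:ℝ) ^ ((d:ℝ)⁻¹) :=
    Real.one_le_rpow (by exact_mod_cast hm) (by positivity)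
  set k : ℕ := Nat.floor ((m:ℝ) ^ ((d:ℝ)⁻¹)) with hkdef
  have hk1 : 1 ≤ k := Nat.le_floor (by exact_mod_cast hm1)
  have hkR : (0:ℝ) < k := by exact_mod_cast hk1
  have hfl : (k:ℝ) ≤ (m:ℝ) ^ ((d:ℝ)⁻¹) := Nat.floor_le (by positivity)
  have hpow : ((m:ℝ) ^ ((d:ℝ)⁻¹)) ^ (d:ℕ) = (m:ℝ) := by
    rw [← Real.rpow_natCast ((m:ℝ) ^ ((d:ℝ)⁻¹)) d, ← Real.rpow_mul (by positivity)]
    rw [inv_mul_cancel₀ (by exact_mod_cast hd.ne')]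
    exact Real.rpow_one _
  have hkm : k ^ d ≤ m := by
    have : ((k:ℝ)) ^ (d:ℕ) ≤ (m:ℝ) := by
      calc ((k:ℝ)) ^ (d:ℕ) ≤ ((m:ℝ) ^ ((d:ℝ)⁻¹)) ^ (d:ℕ) :=
            pow_le_pow_left₀ (by positivity) hfl d
        _ = m := hpow
    exact_mod_cast this
  -- encoding
  let e : (Fin d → Fin k) ≃ Fin (k ^ d) := finFunctionFinEquiv
  let idx : (Fin d → Fin k) → Fin m := fun f => Fin.castLE hkm (e f)
  let p : (Fin d → Fin k) → (Fin d → ℝ) := fun f i => (f i : ℝ) / k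
  let x : Fin m → (Fin d → ℝ) := fun i =>
    if h : (i : ℕ) < k ^ d then p (e.symm ⟨i, h⟩) else 0
  have hx : ∀ f, x (idx f) = p f := by
    intro f
    have h : ((idx f : Fin m) : ℕ) < k ^ d := (e f).2
    simp only [x]
    rw [dif_pos h]
    congr 1
    have : (⟨((idx f : Fin m) : ℕ), h⟩ : Fin (k ^ d)) = e f := by
      ext; rfl
    rw [this, Equiv.symm_apply_apply]
  -- nearest grid function
  let g : (Fin d → ℝ) → (Fin d → Fin k) := fun z i =>
    ⟨min (Nat.floor (z i * k)) (k - 1), by omega⟩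
  let Θ : (Fin m → ℝ) → ((Fin d → ℝ) → ℝ) := fun y z => y (idx (g z))
  refine ⟨x, Θ, ?_, ?_⟩
  · intro i
    constructor <;> intro j <;> simp only [x]
    · split
      · exact div_nonneg (Nat.cast_nonneg _) hkR.le
      · exact le_refl _
    · split
      · show ((_ : Fin k) : ℝ) / k ≤ 1
        rw [div_le_one hkR]
        exact_mod_cast (Fin.is_lt _).le
      · exact zero_le_one
  · intro u K hK hLip z hz
    have hxz : x (idx (g z)) = p (g z) := hx (g z)
    have hmem : p (g z) ∈ Set.Icc (0 : Fin d → ℝ) 1 := by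
      constructor <;> intro j
      · exact div_nonneg (Nat.cast_nonneg _) hkR.le
      · show ((g z j : ℕ) : ℝ) / k ≤ 1
        rw [div_le_one hkR]
        exact_mod_cast (Fin.is_lt _).le
    have hnear : ∀ j, |p (g z) j - z j| ≤ 1 / k := by
      intro j
      have := near_digit k hk1 (z j) (hz.1 j) (hz.2 j)
      rw [abs_sub_comm] at this
      exact this
    have henorm : enorm2 (fun j => p (g z) j - z j) ≤ Real.sqrt d / k := by
      have hsum : (∑ j, (p (g z) j - z j) ^ 2) ≤ d * (1 / k) ^ 2 := by
        calc (∑ j, (p (g z) j - z j) ^ 2) ≤ ∑ _j : Fin d, (1 / (k:ℝ)) ^ 2 := by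
              apply Finset.sum_le_sum
              intro j _
              have := hnear j
              nlinarith [abs_nonneg (p (g z) j - z j), sq_abs (p (g z) j - z j)]
          _ = d * (1 / k) ^ 2 := by simp [mul_comm]
      calc enorm2 (fun j => p (g z) j - z j) ≤ Real.sqrt (d * (1 / k) ^ 2) :=
            Real.sqrt_le_sqrt hsum
        _ = Real.sqrt d / k := by
            rw [Real.sqrt_mul (by positivity), Real.sqrt_sq (by positivity)]
            ring
    have key : |u (p (g z)) - u z| ≤ K * (Real.sqrt d / k) := by
      calc |u (p (g z)) - u z| ≤ K * enorm2 (fun j => p (g z) j - z j) :=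
            hLip _ hmem _ hz
        _ ≤ K * (Real.sqrt d / k) := by
            apply mul_le_mul_of_nonneg_left henorm hK
    have hΘ : Θ (fun i => u (x i)) z = u (p (g z)) := by
      simp only [Θ, hxz]
    rw [hΘ]
    refine key.trans ?_
    -- √d/k ≤ 2√d m^{-1/d}
    have hrpow : (m:ℝ) ^ (-(1:ℝ)/d) = ((m:ℝ) ^ ((d:ℝ)⁻¹))⁻¹ := by
      rw [neg_div, ← Real.rpow_neg (by positivity), one_div]
    have h2k : (m:ℝ) ^ ((d:ℝ)⁻¹) ≤ 2 * k := by
      have : (m:ℝ) ^ ((d:ℝ)⁻¹) < k + 1 := Nat.lt_floor_add_one _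
      have : (k:ℝ) + 1 ≤ 2 * k := by
        have : (1:ℝ) ≤ k := by exact_mod_cast hk1
        linarith
      linarith [Nat.lt_floor_add_one ((m:ℝ) ^ ((d:ℝ)⁻¹))]
    have hfrac : 1 / (k:ℝ) ≤ 2 * (m:ℝ) ^ (-(1:ℝ)/d) := by
      rw [hrpow]
      rw [div_le_iff₀ hkR]
      have hp : (0:ℝ) < (m:ℝ) ^ ((d:ℝ)⁻¹) := by positivity
      rw [mul_comm (2:ℝ), mul_assoc, ← div_le_iff₀' (by positivity : (0:ℝ) < ((m:ℝ) ^ ((d:ℝ)⁻¹))⁻¹)]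
      rw [one_div, inv_inv]
      linarith
    calc K * (Real.sqrt d / k) = K * Real.sqrt d * (1 / k) := by ring
      _ ≤ K * Real.sqrt d * (2 * (m:ℝ) ^ (-(1:ℝ)/d)) := by
          apply mul_le_mul_of_nonneg_left hfrac (by positivity)
      _ = K * 2 * Real.sqrt d * (m:ℝ) ^ (-(1:ℝ)/d) := by ring
end

section
/- For d ∈ N, s ∈ [d], M ≥ 1, y ∈ [0,1]^d, and p ∈ (0,∞], the L^p([0,1]^d) norm of θ^{(s)}_{M,y} satisfies the lower bound ‖θ^{(s)}_{M,y}‖_{L^p([0,1]^d)} ≥ (1/2) · (4sM)^{−s/p}. -/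
/-- The piecewise-linear "spike" function `Λ_{M,σ}`. -/
noncomputable def Lam (M σ t : ℝ) : ℝ :=
  if t ≤ σ - 1 / M then 0 else 1 - M * |t - σ|

/-- The hat function `θ^{(s)}_{M,y}(x) = ρ((∑_{i=1}^s Λ_{M,y_i}(x_i)) - (s-1))`. -/
noncomputable def theta (d s : ℕ) (M : ℝ) (y x : Fin d → ℝ) : ℝ :=
  max 0 ((∑ i ∈ Finset.univ.filter (fun i : Fin d => (i : ℕ) < s), Lam M (y i) (x i))
    - ((s : ℝ) - 1))

open MeasureTheory
open scoped ENNReal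

/-- `‖θ^{(s)}_{M,y}‖_{L^p([0,1]^d)} ≥ (1/2) · (4sM)^{-s/p}` for `p ∈ (0,∞]`
(for `p = ∞` the bound is `1/2`, via `p.toReal = 0`). -/
theorem theta_lp_norm_lower (d s : ℕ) (hs1 : 1 ≤ s) (hsd : s ≤ d) (M : ℝ) (hM : 1 ≤ M)
    (y : Fin d → ℝ) (hy : y ∈ Set.Icc (0 : Fin d → ℝ) 1) (p : ℝ≥0∞) (hp : 0 < p) :
    ENNReal.ofReal ((1 / 2) * (4 * (s : ℝ) * M) ^ (-(s : ℝ) / p.toReal))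
      ≤ eLpNorm (theta d s M y) p (volume.restrict (Set.Icc (0 : Fin d → ℝ) 1)) := by
  have hM0 : (0:ℝ) < M := lt_of_lt_of_le one_pos hM
  have hs0 : (0:ℝ) < (s:ℝ) := by exact_mod_cast hs1
  have h4sM : (0:ℝ) < 4 * (s:ℝ) * M := by positivity
  set δ : ℝ := 1 / (4 * (s:ℝ) * M) with hδdef
  have hδ0 : 0 < δ := by positivity
  have hs1' : (1:ℝ) ≤ (s:ℝ) := by exact_mod_cast hs1
  have hsM1 : (1:ℝ) ≤ (s:ℝ) * M := by nlinarith [mul_le_mul hs1' hM zero_le_one hs0.le]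
  have hδM : δ < 1 / M := by
    rw [div_lt_div_iff₀ h4sM hM0]
    nlinarith [mul_le_mul hs1' hM zero_le_one hs0.le]
  have hδ2 : δ ≤ 1 / 2 := by
    rw [div_le_div_iff₀ h4sM two_pos]
    nlinarith [mul_le_mul hs1' hM zero_le_one hs0.le]
  have hsMδ : (s:ℝ) * (M * δ) = 1/4 := by
    field_simp [hδdef]
    have h4 : (4 * (s:ℝ) * M) * δ = 1 := by rw [hδdef]; exact mul_one_div_cancel h4sM.ne'
    linarith
  have hy0 : ∀ i, 0 ≤ y i := fun i => hy.1 i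
  have hy1 : ∀ i, y i ≤ 1 := fun i => hy.2 i
  set a : Fin d → ℝ := fun i =>
    if (i:ℕ) < s then (if y i ≤ 1/2 then y i else y i - δ) else 0 with ha
  set b : Fin d → ℝ := fun i =>
    if (i:ℕ) < s then (if y i ≤ 1/2 then y i + δ else y i) else 1 with hb
  set E := Set.Icc a b with hE
  -- the box is inside the unit cube
  have hE01 : E ⊆ Set.Icc (0 : Fin d → ℝ) 1 := by
    rintro x ⟨hx1, hx2⟩
    refine ⟨fun i => ?_, fun i => ?_⟩
    · have h1 := hx1 i
      simp only [ha] at h1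
      show (0:ℝ) ≤ x i
      have := hy0 i
      split_ifs at h1 with h h'
      · linarith
      · rw [not_le] at h'
        linarith
      · linarith
    · have h2 := hx2 i
      simp only [hb] at h2
      show x i ≤ (1:ℝ)
      have := hy1 i
      split_ifs at h2 with h h'
      · linarith
      · linarith
      · linarith
  -- cardinality of the index set
  have hcard : (Finset.univ.filter fun i : Fin d => (i:ℕ) < s).card = s := by
    have heq : (Finset.univ.filter fun i : Fin d => (i:ℕ) < s) =
        Finset.map (Fin.castLEEmb hsd) Finset.univ := by
      ext i
      simp only [Finset.mem_filter, Finset.mem_univ, true_and, Finset.mem_map,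
        Fin.castLEEmb, Function.Embedding.coeFn_mk]
      constructor
      · intro h
        exact ⟨⟨(i:ℕ), h⟩, by ext; simp [Fin.castLE]⟩
      · rintro ⟨j, rfl⟩
        exact j.2
    rw [heq, Finset.card_map, Finset.card_univ, Fintype.card_fin]
  -- pointwise lower bound on the box
  have hθ : ∀ x ∈ E, (1:ℝ)/2 ≤ theta d s M y x := by
    intro x hx
    have key : ∀ i ∈ Finset.univ.filter (fun i : Fin d => (i:ℕ) < s),
        1 - M * δ ≤ Lam M (y i) (x i) := by
      intro i hi
      simp only [Finset.mem_filter] at hi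
      have his : (i:ℕ) < s := hi.2
      have hxi1 : a i ≤ x i := hx.1 i
      have hxi2 : x i ≤ b i := hx.2 i
      simp only [ha, hb, if_pos his] at hxi1 hxi2
      have hMinv : (0:ℝ) < 1 / M := by positivity
      by_cases hcase : y i ≤ 1/2
      · rw [if_pos hcase] at hxi1 hxi2
        have habs : |x i - y i| ≤ δ := by
          rw [abs_le]; constructor <;> linarith
        rw [Lam, if_neg (by linarith)]
        nlinarith
      · rw [if_neg hcase] at hxi1 hxi2
        have habs : |x i - y i| ≤ δ := by
          rw [abs_le]; constructor <;> linarith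
        rw [Lam, if_neg (by linarith)]
        nlinarith
    have hsum : (s:ℝ) * (1 - M * δ) ≤
        ∑ i ∈ Finset.univ.filter (fun i : Fin d => (i:ℕ) < s), Lam M (y i) (x i) := by
      calc (s:ℝ) * (1 - M * δ)
          = ∑ _i ∈ Finset.univ.filter (fun i : Fin d => (i:ℕ) < s), (1 - M * δ) := by
            rw [Finset.sum_const, hcard, nsmul_eq_mul]
        _ ≤ _ := Finset.sum_le_sum key
    have hΔ : (1:ℝ)/2 ≤
        (∑ i ∈ Finset.univ.filter (fun i : Fin d => (i:ℕ) < s), Lam M (y i) (x i))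
          - ((s:ℝ) - 1) := by nlinarith
    exact hΔ.trans (le_max_right _ _)
  -- measure of the box
  have hEmeas : MeasurableSet E := measurableSet_Icc
  have hvol : volume E = ENNReal.ofReal (δ ^ s) := by
    rw [hE, Real.volume_Icc_pi]
    have hba : ∀ i : Fin d, ENNReal.ofReal (b i - a i) =
        if (i:ℕ) < s then ENNReal.ofReal δ else 1 := by
      intro i
      simp only [ha, hb]
      split_ifs with h h2
      · congr 1; ring
      · congr 1; ring
      · norm_num
    calc ∏ i : Fin d, ENNReal.ofReal (b i - a i)
        = ∏ i : Fin d, (if (i:ℕ) < s then ENNReal.ofReal δ else 1) :=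
          Finset.prod_congr rfl (fun i _ => hba i)
      _ = ∏ i ∈ Finset.univ.filter (fun i : Fin d => (i:ℕ) < s), ENNReal.ofReal δ := by
          rw [Finset.prod_filter]
      _ = ENNReal.ofReal δ ^ s := by rw [Finset.prod_const, hcard]
      _ = ENNReal.ofReal (δ ^ s) := by rw [← ENNReal.ofReal_pow hδ0.le]
  have hμE : (volume.restrict (Set.Icc (0 : Fin d → ℝ) 1)) E = ENNReal.ofReal (δ ^ s) := by
    rw [Measure.restrict_apply hEmeas, Set.inter_eq_self_of_subset_left hE01, hvol]
  have hμE0 : (volume.restrict (Set.Icc (0 : Fin d → ℝ) 1)) E ≠ 0 := by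
    rw [hμE]
    exact (ENNReal.ofReal_pos.mpr (pow_pos hδ0 s)).ne'
  -- compare with the indicator of the box
  have hmono : eLpNorm (E.indicator fun _ => (1/2 : ℝ)) p
        (volume.restrict (Set.Icc (0 : Fin d → ℝ) 1))
      ≤ eLpNorm (theta d s M y) p (volume.restrict (Set.Icc (0 : Fin d → ℝ) 1)) := by
    apply eLpNorm_mono
    intro x
    rw [Real.norm_eq_abs, Real.norm_eq_abs]
    by_cases hxE : x ∈ E
    · rw [Set.indicator_of_mem hxE]
      have h0 : (0:ℝ) ≤ theta d s M y x := le_max_left _ _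
      rw [abs_of_nonneg (by norm_num : (0:ℝ) ≤ 1/2), abs_of_nonneg h0]
      exact hθ x hxE
    · rw [Set.indicator_of_notMem hxE]
      simp [abs_nonneg]
  refine le_trans ?_ hmono
  rw [eLpNorm_indicator_const' hEmeas hμE0 hp.ne', hμE]
  have hnorm : ‖(1/2 : ℝ)‖ₑ = ENNReal.ofReal (1/2) :=
    Real.enorm_eq_ofReal (by norm_num)
  rw [hnorm, ENNReal.ofReal_rpow_of_pos (pow_pos hδ0 s),
    ← ENNReal.ofReal_mul (by norm_num : (0:ℝ) ≤ 1/2)]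
  apply le_of_eq
  congr 1
  congr 1
  have h1 : (δ ^ s : ℝ) = (4 * (s:ℝ) * M) ^ (-(s:ℝ)) := by
    rw [hδdef, one_div, inv_pow, ← Real.rpow_natCast (4 * (s:ℝ) * M) s,
      ← Real.rpow_neg h4sM.le]
  rw [h1, ← Real.rpow_mul h4sM.le]
  congr 1
  ring
end

section
/- Let d ∈ N, L ≥ 3, B ≥ 3 integers, c > 0, q ∈ [1,2], and s ∈ N with s ≤ min{d, B/3}. Then for every M ∈ N, ν ∈ {±1}, and y ∈ [0,1]^d, the function ν · (c^L s^{1−2/q}/(2·3^{2/q})) · (Ms)^{−1} · θ^{(s)}_{M,y} can be realized as a ReLU network with architecture (d, B, …, B, 1) (B appearing L−1 times) all of whose weight matrices and bias vectors have entrywise ℓ^q norm at most c. -/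
open scoped ENNReal

/-- The architecture `(d, B, …, B, 1)` with `B` appearing in positions `1,…,L-1`. -/
def Narch (d B L : ℕ) (n : ℕ) : ℕ :=
  if n = 0 then d else if n < L then B else 1

/- ====== auxiliary material ====== -/

open Finset in
lemma sum_range_two_mul (h : ℕ → ℝ) (n : ℕ) :
    ∑ j ∈ range (2*n), h j = ∑ i ∈ range n, (h (2*i) + h (2*i+1)) := by
  induction n with
  | zero => simp
  | succ n ih =>
      rw [Nat.mul_succ, sum_range_succ, sum_range_succ, sum_range_succ, ih]; ring

lemma lam_eq (M σ t : ℝ) (hM : 0 < M) :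
    Lam M σ t = M * (max 0 (t - σ + 1/M) - 2 * max 0 (t - σ)) := by
  unfold Lam
  rcases le_or_gt t (σ - 1/M) with h | h
  · have h1 : t - σ + 1/M ≤ 0 := by linarith
    have h2 : t - σ ≤ 0 := by nlinarith [one_div_pos.mpr hM]
    rw [if_pos h, max_eq_left h1, max_eq_left h2]; ring
  · rw [if_neg (not_le.mpr h)]
    rcases le_or_gt t σ with h2 | h2
    · rw [abs_of_nonpos (by linarith), max_eq_right (by linarith), max_eq_left (by linarith)]
      field_simp; ring
    · rw [abs_of_pos (by linarith), max_eq_right (by nlinarith [one_div_pos.mpr hM]),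
        max_eq_right (by linarith)]
      field_simp; ring

lemma fin_sum_eq (n : ℕ) (v : Fin n → ℝ) (f : ℕ → ℝ) (h : ∀ j : Fin n, v j = f j.val) :
    ∑ j, v j = ∑ j ∈ Finset.range n, f j := by
  rw [← Fin.sum_univ_eq_sum_range]; exact Finset.sum_congr rfl fun j _ => h j

open Finset in
lemma sum_indicator_lt (Bn m : ℕ) (h : m ≤ Bn) (A : ℝ) :
    ∑ k ∈ range Bn, (if k < m then A else 0) = m * A := by
  rw [← Finset.sum_subset (Finset.range_subset_range.mpr h)
      (fun x _ hx => if_neg (by simpa using hx))]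
  rw [Finset.sum_congr rfl (fun k hk => if_pos (mem_range.mp hk)), Finset.sum_const,
    card_range, nsmul_eq_mul]

/-- weight entries -/
noncomputable def Fw (L s : ℕ) (a w w'' ν c : ℝ) : ℕ → ℕ → ℕ → ℝ := fun i k j =>
  if i = 0 then (if k < 2*s ∧ j = k/2 then a else 0)
  else if i = 1 then
    (if k = 0 then
      (if j < 2*s then (if j % 2 = 0 then w else -(2*w))
       else if j = 2*s then -w'' else 0)
     else 0)
  else if i = L - 1 then (if k = 0 ∧ j = 0 then ν*c else 0)
  else if i < L - 1 then (if k = 0 ∧ j = 0 then c else 0)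
  else 0

/-- bias entries -/
noncomputable def Gb (M' : ℝ) (s : ℕ) (a a' : ℝ) (yy : ℕ → ℝ) : ℕ → ℕ → ℝ := fun i k =>
  if i = 0 then
    (if k < 2*s then (if k % 2 = 0 then a*(1/M' - yy (k/2)) else -(a * yy (k/2)))
     else if k = 2*s then a' else 0)
  else 0

open Finset in
lemma sum_single_entry (m n : ℕ) (hm : 0 < m) (hn : 0 < n) (z q : ℝ) (hq : q ≠ 0) :
    ∑ k ∈ range m, ∑ j ∈ range n, |if k = 0 ∧ j = 0 then z else 0| ^ q = |z| ^ q := by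
  have h1 : ∀ k ∈ range m,
      (∑ j ∈ range n, |if k = 0 ∧ j = 0 then z else 0| ^ q)
        = if k = 0 then |z| ^ q else 0 := by
    intro k _
    have hterm : ∀ j, |if k = 0 ∧ j = 0 then z else 0| ^ q
        = if k = 0 then (if j = 0 then |z| ^ q else 0) else 0 := by
      intro j
      by_cases hk : k = 0 <;> by_cases hj : j = 0 <;>
        simp [hk, hj, Real.zero_rpow hq]
    rw [Finset.sum_congr rfl fun j _ => hterm j]
    by_cases hk : k = 0
    · subst hk
      rw [Finset.sum_congr rfl fun j _ => if_pos rfl,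
        Finset.sum_ite_eq' (range n) 0 fun _ => |z| ^ q, if_pos (mem_range.mpr hn),
        if_pos rfl]
    · simp [hk]
  rw [Finset.sum_congr rfl h1,
    Finset.sum_ite_eq' (range m) 0 fun _ => |z| ^ q, if_pos (mem_range.mpr hm)]

set_option maxHeartbeats 4000000 in
/-- for `q ∈ [1,2]`, the scaled hat function
`ν · (c^L s^{1-2/q}/(2·3^{2/q})) · (Ms)⁻¹ · θ^{(s)}_{M,y}` is the realization of a ReLU
network with architecture `(d, B, …, B, 1)` (`B` appearing `L-1` times) all of whose
weight matrices and bias vectors have entrywise ℓ^q norm at most `c`. -/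
theorem hat_function_network_small_q (d L B : ℕ) (hL : 3 ≤ L) (hB : 3 ≤ B)
    (c : ℝ) (hc : 0 < c) (q : ℝ) (hq1 : 1 ≤ q) (hq2 : q ≤ 2)
    (s : ℕ) (hs1 : 1 ≤ s) (hsd : s ≤ d) (hsB : 3 * s ≤ B)
    (M : ℕ) (hM : 0 < M) (ν : ℝ) (hν : ν = 1 ∨ ν = -1)
    (y : Fin d → ℝ) (hy : y ∈ Set.Icc (0 : Fin d → ℝ) 1) :
    ∃ (W : (i : ℕ) → Matrix (Fin (Narch d B L (i + 1))) (Fin (Narch d B L i)) ℝ)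
      (b : (i : ℕ) → Fin (Narch d B L (i + 1)) → ℝ),
      (∀ i < L,
        (∑ k, ∑ j, |W i k j| ^ q) ^ (1 / q) ≤ c ∧
        (∑ k, |b i k| ^ q) ^ (1 / q) ≤ c) ∧
      ∀ x : Fin d → ℝ,
        realize (Narch d B L) W b L x
          = fun _ =>
              ν * (c ^ L * (s : ℝ) ^ (1 - 2 / q) / (2 * 3 ^ (2 / q))) / ((M : ℝ) * s)
                * theta d s (M : ℝ) y x := by
  obtain ⟨K, rfl⟩ : ∃ K, L = K + 3 := ⟨L - 3, by omega⟩
  obtain ⟨hy0, hy1⟩ := hy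
  have hq0 : (0:ℝ) < q := lt_of_lt_of_le one_pos hq1
  have hqne : q ≠ 0 := ne_of_gt hq0
  have hsR1 : (1:ℝ) ≤ (s:ℝ) := by exact_mod_cast hs1
  have hsp : (0:ℝ) < (s:ℝ) := by linarith
  have hMR : (0:ℝ) < (M:ℝ) := by exact_mod_cast hM
  have hMR1 : (1:ℝ) ≤ (M:ℝ) := by exact_mod_cast hM
  have h3s : (0:ℝ) < 3*(s:ℝ) := by linarith
  set P : ℝ := ((3:ℝ)*(s:ℝ)) ^ (1/q) with hPdef
  have hP : 0 < P := Real.rpow_pos_of_pos h3s _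
  have hPq : P ^ q = 3*(s:ℝ) := by
    rw [hPdef, ← Real.rpow_mul h3s.le, one_div_mul_cancel hqne, Real.rpow_one]
  set Q : ℝ := (3:ℝ) ^ (1/q) with hQdef
  have hQ : 0 < Q := Real.rpow_pos_of_pos (by norm_num) _
  have hQq : Q ^ q = 3 := by
    rw [hQdef, ← Real.rpow_mul (by norm_num : (0:ℝ) ≤ 3), one_div_mul_cancel hqne,
      Real.rpow_one]
  set a : ℝ := c / P with ha_def
  set a' : ℝ := c / Q with ha'_def
  set w : ℝ := c / (2*P) with hw_def
  set w'' : ℝ := w * a * ((s:ℝ) - 1) / ((M:ℝ) * a') with hw''_def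
  have ha : 0 < a := by positivity
  have ha' : 0 < a' := by positivity
  have hw : 0 < w := by positivity
  have hw'' : 0 ≤ w'' := by
    rw [hw''_def]
    exact div_nonneg (mul_nonneg (mul_nonneg hw.le ha.le) (by linarith)) (by positivity)
  have hcq : 0 < c ^ q := Real.rpow_pos_of_pos hc q
  have key : ∀ X : ℝ, 0 ≤ X → X ≤ c ^ q → X ^ (1/q) ≤ c := by
    intro X h0 h1
    calc X ^ (1/q) ≤ (c ^ q) ^ (1/q) := Real.rpow_le_rpow h0 h1 (by positivity)
    _ = c := by
        rw [← Real.rpow_mul hc.le, mul_one_div, div_self hqne, Real.rpow_one]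
  have hNB : ∀ n, n ≠ 0 → n < K + 3 → Narch d B (K+3) n = B := by
    intro n h1 h2; simp [Narch, h1, h2]
  have hN0 : Narch d B (K+3) 0 = d := rfl
  have hNpos : ∀ n, 0 < Narch d B (K+3) n := by
    intro n; unfold Narch; split_ifs <;> omega
  have h2sB : 2*s + 1 ≤ B := by omega
  set yy : ℕ → ℝ := fun n => if h : n < d then y ⟨n, h⟩ else 0 with hyy
  have hyyb : ∀ n, 0 ≤ yy n ∧ yy n ≤ 1 := by
    intro n; rw [hyy]; dsimp only
    split
    · exact ⟨hy0 _, hy1 _⟩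
    · norm_num
  -- abs-power values
  have haq : |a| ^ q = c ^ q / (3*(s:ℝ)) := by
    rw [abs_of_pos ha, ha_def, Real.div_rpow hc.le hP.le, hPq]
  have ha'q : |a'| ^ q = c ^ q / 3 := by
    rw [abs_of_pos ha', ha'_def, Real.div_rpow hc.le hQ.le, hQq]
  have hwq : |w| ^ q = c ^ q / (2 ^ q * (3*(s:ℝ))) := by
    rw [abs_of_pos hw, hw_def, Real.div_rpow hc.le (by positivity),
      Real.mul_rpow (by norm_num) hP.le, hPq]
  have h2wq : |(-(2*w))| ^ q = 2 ^ q * |w| ^ q := by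
    rw [abs_neg, abs_mul, Real.mul_rpow (abs_nonneg _) (abs_nonneg _), abs_two]
  have h2q : (2:ℝ) ≤ 2 ^ q := by
    calc (2:ℝ) = 2 ^ (1:ℝ) := (Real.rpow_one 2).symm
    _ ≤ 2 ^ q := Real.rpow_le_rpow_of_exponent_le one_le_two hq1
  have h2qpos : (0:ℝ) < 2 ^ q := Real.rpow_pos_of_pos two_pos q
  have hMq : (1:ℝ) ≤ (M:ℝ) ^ q := Real.one_le_rpow hMR1 hq0.le
  have hsq2 : ((s:ℝ)-1) ^ q ≤ (s:ℝ)^2 := by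
    calc ((s:ℝ)-1) ^ q ≤ (s:ℝ) ^ q :=
          Real.rpow_le_rpow (by linarith) (by linarith) hq0.le
    _ ≤ (s:ℝ) ^ (2:ℝ) := Real.rpow_le_rpow_of_exponent_le hsR1 hq2
    _ = (s:ℝ)^2 := by rw [← Real.rpow_natCast (s:ℝ) 2]; norm_num
  have hw''v : w'' = c*((s:ℝ)-1)*Q / (2*(P*P)*(M:ℝ)) := by
    rw [hw''_def, hw_def, ha_def, ha'_def]
    field_simp
  have hw''q : |w''| ^ q ≤ c ^ q / 6 := by
    have e1 : |w''| ^ q = (c*((s:ℝ)-1)*Q) ^ q / (2*(P*P)*(M:ℝ)) ^ q := by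
      rw [abs_of_nonneg hw'', hw''v,
        Real.div_rpow (mul_nonneg (mul_nonneg hc.le (by linarith)) hQ.le) (by positivity)]
    have e2 : (c*((s:ℝ)-1)*Q) ^ q = c ^ q * ((s:ℝ)-1) ^ q * 3 := by
      rw [Real.mul_rpow (mul_nonneg hc.le (by linarith)) hQ.le,
        Real.mul_rpow hc.le (by linarith), hQq]
    have e3 : (2*(P*P)*(M:ℝ)) ^ q = 2 ^ q * ((3*(s:ℝ))*(3*(s:ℝ))) * (M:ℝ) ^ q := by
      rw [Real.mul_rpow (by positivity) hMR.le, Real.mul_rpow (by norm_num) (by positivity),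
        Real.mul_rpow hP.le hP.le, hPq]
    rw [e1, e2, e3, div_le_div_iff₀ (by positivity) (by norm_num)]
    have i2 : (2:ℝ)*(9*(s:ℝ)^2) ≤ 2 ^ q * (9*(s:ℝ)^2) :=
      mul_le_mul_of_nonneg_right h2q (by positivity)
    have i3 : 2 ^ q * (9*(s:ℝ)^2) * 1 ≤ 2 ^ q * (9*(s:ℝ)^2) * (M:ℝ) ^ q :=
      mul_le_mul_of_nonneg_left hMq (by positivity)
    calc c ^ q * ((s:ℝ)-1) ^ q * 3 * 6 = (18*((s:ℝ)-1) ^ q) * c ^ q := by ring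
    _ ≤ (18*(s:ℝ)^2) * c ^ q :=
        mul_le_mul_of_nonneg_right (by linarith) hcq.le
    _ ≤ (2 ^ q * (9*(s:ℝ)^2) * (M:ℝ) ^ q) * c ^ q :=
        mul_le_mul_of_nonneg_right (by linarith) hcq.le
    _ = c ^ q * (2 ^ q * ((3*(s:ℝ))*(3*(s:ℝ))) * (M:ℝ) ^ q) := by ring
  set Wmat : (i : ℕ) → Matrix (Fin (Narch d B (K+3) (i+1))) (Fin (Narch d B (K+3) i)) ℝ :=
    fun i k j => Fw (K+3) s a w w'' ν c i k.val j.val with hWmat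
  set bvec : (i : ℕ) → Fin (Narch d B (K+3) (i+1)) → ℝ :=
    fun i k => Gb (M:ℝ) s a a' yy i k.val with hbvec
  refine ⟨Wmat, bvec, ?_, ?_⟩
  · -- norms
    intro i hi
    have convW : (∑ k, ∑ j, |Wmat i k j| ^ q)
        = ∑ k ∈ Finset.range (Narch d B (K+3) (i+1)),
            ∑ j ∈ Finset.range (Narch d B (K+3) i), |Fw (K+3) s a w w'' ν c i k j| ^ q := by
      refine fin_sum_eq _ _ _ (fun k => ?_)
      exact fin_sum_eq _ _ _ (fun j => rfl)
    have convB : (∑ k, |bvec i k| ^ q)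
        = ∑ k ∈ Finset.range (Narch d B (K+3) (i+1)), |Gb (M:ℝ) s a a' yy i k| ^ q :=
      fin_sum_eq _ _ _ (fun k => rfl)
    rcases Nat.lt_or_ge i 2 with hi2 | hi2
    · interval_cases i
      · -- i = 0
        constructor
        · refine key _ (by positivity) ?_
          rw [convW, hN0, hNB 1 one_ne_zero (by omega)]
          have hrow : ∀ k ∈ Finset.range B,
              (∑ j ∈ Finset.range d, |Fw (K+3) s a w w'' ν c 0 k j| ^ q)
                = if k < 2*s then |a| ^ q else 0 := by
            intro k _
            by_cases hk : k < 2*s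
            · have hterm : ∀ j, |Fw (K+3) s a w w'' ν c 0 k j| ^ q
                  = if j = k/2 then |a| ^ q else 0 := by
                intro j
                by_cases hj : j = k/2
                · simp [Fw, hj, hk]
                · simp [Fw, hj, hk, Real.zero_rpow hqne]
              rw [Finset.sum_congr rfl fun j _ => hterm j,
                Finset.sum_ite_eq' (Finset.range d) (k/2) fun _ => |a| ^ q,
                if_pos (Finset.mem_range.mpr (by omega)), if_pos hk]
            · have hterm : ∀ j, |Fw (K+3) s a w w'' ν c 0 k j| ^ q = 0 := by
                intro j; simp [Fw, hk, Real.zero_rpow hqne]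
              rw [Finset.sum_congr rfl fun j _ => hterm j, if_neg hk]
              simp
          rw [Finset.sum_congr rfl hrow, sum_indicator_lt B (2*s) (by omega) (|a| ^ q), haq]
          push_cast
          have hval : (2*(s:ℝ))*(c ^ q/(3*(s:ℝ))) = 2/3*c ^ q := by
            field_simp
          rw [hval]; linarith
        · refine key _ (by positivity) ?_
          rw [convB, hNB 1 one_ne_zero (by omega)]
          have hbd : ∀ k ∈ Finset.range B, |Gb (M:ℝ) s a a' yy 0 k| ^ q
              ≤ (if k < 2*s then |a| ^ q else 0) + (if k = 2*s then |a'| ^ q else 0) := by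
            intro k _
            simp only [Gb, if_pos rfl]
            by_cases hk : k < 2*s
            · rw [if_pos hk, if_pos hk, if_neg (by omega : ¬ k = 2*s), add_zero]
              have hMb : 0 < 1/(M:ℝ) ∧ 1/(M:ℝ) ≤ 1 := by
                constructor
                · positivity
                · rw [div_le_one hMR]; exact hMR1
              have hb : |if k % 2 = 0 then a*(1/(M:ℝ) - yy (k/2)) else -(a * yy (k/2))| ≤ |a| := by
                obtain ⟨hy0', hy1'⟩ := hyyb (k/2)
                rw [abs_of_pos ha]
                split_ifs
                · rw [abs_mul, abs_of_pos ha]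
                  have : |1/(M:ℝ) - yy (k/2)| ≤ 1 := abs_le.mpr ⟨by linarith, by linarith⟩
                  nlinarith
                · rw [abs_neg, abs_mul, abs_of_pos ha]
                  have : |yy (k/2)| ≤ 1 := abs_le.mpr ⟨by linarith, by linarith⟩
                  nlinarith
              exact Real.rpow_le_rpow (abs_nonneg _) hb hq0.le
            · rw [if_neg hk, if_neg hk, zero_add]
              by_cases hk2 : k = 2*s
              · simp [hk2]
              · rw [if_neg hk2, if_neg hk2]
                simp [Real.zero_rpow hqne]
          calc (∑ k ∈ Finset.range B, |Gb (M:ℝ) s a a' yy 0 k| ^ q)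
              ≤ ∑ k ∈ Finset.range B,
                  ((if k < 2*s then |a| ^ q else 0) + (if k = 2*s then |a'| ^ q else 0)) :=
                Finset.sum_le_sum hbd
          _ = (2*s : ℕ) * |a| ^ q + |a'| ^ q := by
              rw [Finset.sum_add_distrib, sum_indicator_lt B (2*s) (by omega) (|a| ^ q),
                Finset.sum_ite_eq' (Finset.range B) (2*s) fun _ => |a'| ^ q,
                if_pos (Finset.mem_range.mpr (by omega))]
          _ ≤ c ^ q := by
              rw [haq, ha'q]
              push_cast
              have hval : (2*(s:ℝ))*(c ^ q/(3*(s:ℝ))) + c ^ q/3 = c ^ q := by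
                field_simp; ring
              linarith
      · -- i = 1
        constructor
        · refine key _ (by positivity) ?_
          rw [convW, hNB 1 one_ne_zero (by omega), hNB 2 (by omega) (by omega)]
          have hrow : ∀ k ∈ Finset.range B,
              (∑ j ∈ Finset.range B, |Fw (K+3) s a w w'' ν c 1 k j| ^ q)
                = if k = 0 then
                    ((s:ℝ) * (|w| ^ q + |(-(2*w))| ^ q) + |w''| ^ q) else 0 := by
            intro k _
            by_cases hk : k = 0
            · subst hk
              rw [if_pos rfl]
              have hterm : ∀ j, |Fw (K+3) s a w w'' ν c 1 0 j| ^ q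
                  = (if j < 2*s then (if j % 2 = 0 then |w| ^ q else |(-(2*w))| ^ q) else 0)
                    + (if j = 2*s then |w''| ^ q else 0) := by
                intro j
                by_cases h1 : j < 2*s
                · have h3 : ¬ j = 2*s := by omega
                  by_cases h2 : j % 2 = 0 <;> simp [Fw, h1, h2, if_neg h3]
                · by_cases h2 : j = 2*s
                  · simp [Fw, h1, h2]
                  · simp [Fw, h1, h2, Real.zero_rpow hqne]
              rw [Finset.sum_congr rfl fun j _ => hterm j, Finset.sum_add_distrib,
                Finset.sum_ite_eq' (Finset.range B) (2*s) fun _ => |w''| ^ q,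
                if_pos (Finset.mem_range.mpr (by omega))]
              congr 1
              rw [← Finset.sum_subset (Finset.range_subset_range.mpr (by omega : 2*s ≤ B))
                  (fun x _ hx => if_neg (by simpa using hx))]
              rw [Finset.sum_congr rfl
                  (fun j hj => if_pos (Finset.mem_range.mp hj)), sum_range_two_mul]
              have hterm2 : ∀ i ∈ Finset.range s,
                  ((if (2*i) % 2 = 0 then |w| ^ q else |(-(2*w))| ^ q)
                    + (if (2*i+1) % 2 = 0 then |w| ^ q else |(-(2*w))| ^ q))
                    = |w| ^ q + |(-(2*w))| ^ q := by
                intro i _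
                rw [if_pos (by omega), if_neg (by omega)]
              rw [Finset.sum_congr rfl hterm2, Finset.sum_const, Finset.card_range,
                nsmul_eq_mul]
            · have hterm : ∀ j, |Fw (K+3) s a w w'' ν c 1 k j| ^ q = 0 := by
                intro j; simp [Fw, hk, Real.zero_rpow hqne]
              rw [Finset.sum_congr rfl fun j _ => hterm j, if_neg hk]
              simp
          rw [Finset.sum_congr rfl hrow,
            Finset.sum_ite_eq' (Finset.range B) 0
              (fun _ => ((s:ℝ) * (|w| ^ q + |(-(2*w))| ^ q) + |w''| ^ q)),
            if_pos (Finset.mem_range.mpr (by omega))]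
          rw [h2wq, hwq]
          push_cast
          have hval : (s:ℝ) * (c ^ q/(2 ^ q*(3*(s:ℝ))) + 2 ^ q * (c ^ q/(2 ^ q*(3*(s:ℝ)))))
              = (1 + 2 ^ q)/(2 ^ q * 3) * c ^ q := by
            field_simp
          have hfrac : (1 + (2:ℝ) ^ q)/((2:ℝ) ^ q * 3) ≤ 1/2 := by
            rw [div_le_div_iff₀ (by positivity) (by norm_num)]
            linarith
          have := hw''q
          nlinarith
        · refine key _ (by positivity) ?_
          have hzero : ∀ k ∈ Finset.range (Narch d B (K+3) 2),
              |Gb (M:ℝ) s a a' yy 1 k| ^ q = 0 := by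
            intro k _
            simp [Gb, Real.zero_rpow hqne]
          rw [convB, Finset.sum_congr rfl hzero, Finset.sum_const]
          simp [hcq.le]
    · -- 2 ≤ i
      have hFi : ∀ k j, Fw (K+3) s a w w'' ν c i k j
          = if k = 0 ∧ j = 0 then (if i = K+2 then ν*c else c) else 0 := by
        intro k j
        simp only [Fw, if_neg (by omega : ¬ i = 0), if_neg (by omega : ¬ i = 1)]
        by_cases hiL : i = K+2
        · rw [if_pos (by omega : i = K+3-1), if_pos hiL]
        · rw [if_neg (by omega : ¬ i = K+3-1), if_pos (by omega : i < K+3-1), if_neg hiL]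
      have habsz : |if i = K+2 then ν*c else c| = c := by
        split_ifs
        · rcases hν with h | h <;> rw [h] <;> simp [abs_of_pos hc]
        · exact abs_of_pos hc
      constructor
      · refine key _ (Finset.sum_nonneg fun k _ => Finset.sum_nonneg fun j _ =>
          Real.rpow_nonneg (abs_nonneg _) q) ?_
        rw [convW, Finset.sum_congr rfl (fun k _ => Finset.sum_congr rfl
          (fun j _ => by rw [hFi k j])),
          sum_single_entry _ _ (hNpos _) (hNpos _) _ q hqne, habsz]
      · refine key _ (Finset.sum_nonneg fun k _ =>
          Real.rpow_nonneg (abs_nonneg _) q) ?_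
        have hzero : ∀ k ∈ Finset.range (Narch d B (K+3) (i+1)),
            |Gb (M:ℝ) s a a' yy i k| ^ q = 0 := by
          intro k _
          have h0 : ¬ i = 0 := by omega
          simp [Gb, if_neg h0, Real.zero_rpow hqne]
        rw [convB, Finset.sum_congr rfl hzero, Finset.sum_const]
        simp [hcq.le]
  · -- realization
    intro x
    set xx : ℕ → ℝ := fun n => if h : n < d then x ⟨n, h⟩ else 0 with hxx
    have hxv : ∀ j : Fin d, x j = xx j.val := by
      intro j; rw [hxx]; dsimp only; rw [dif_pos j.isLt]
    have hyv : ∀ j : Fin d, y j = yy j.val := by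
      intro j; rw [hyy]; dsimp only; rw [dif_pos j.isLt]
    set U : ℕ → ℝ := fun n =>
      if n < 2*s then a * max 0 (xx (n/2) - yy (n/2) + (if n % 2 = 0 then 1/(M:ℝ) else 0))
      else if n = 2*s then a' else 0 with hU
    have hmaxa : ∀ z : ℝ, max 0 (a * z) = a * max 0 z := by
      intro z; rw [mul_max_of_nonneg _ _ ha.le, mul_zero]
    have hθ0 : 0 ≤ theta d s (M:ℝ) y x := le_max_left _ _
    -- layer 1
    have hlay1 : ∀ k : Fin (Narch d B (K+3) 1),
        layers (Narch d B (K+3)) Wmat bvec 1 x k = U k.val := by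
      intro k
      show max 0 ((Wmat 0).mulVec (layers (Narch d B (K+3)) Wmat bvec 0 x) k
        + bvec 0 k) = U k.val
      have hmv : (Wmat 0).mulVec (layers (Narch d B (K+3)) Wmat bvec 0 x) k
          = ∑ j ∈ Finset.range d, Fw (K+3) s a w w'' ν c 0 k.val j * xx j := by
        simp only [Matrix.mulVec, dotProduct]
        exact fin_sum_eq _ _ _ (fun j => by
          show Fw (K+3) s a w w'' ν c 0 k.val j.val * x j = _
          rw [hxv j])
      rw [hmv]
      by_cases hk : k.val < 2*s
      · have hsum : (∑ j ∈ Finset.range d, Fw (K+3) s a w w'' ν c 0 k.val j * xx j)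
            = a * xx (k.val/2) := by
          have hterm : ∀ j, Fw (K+3) s a w w'' ν c 0 k.val j * xx j
              = if j = k.val/2 then a * xx j else 0 := by
            intro j
            by_cases hj : j = k.val/2
            · simp [Fw, hj, hk]
            · simp [Fw, hj, hk]
          rw [Finset.sum_congr rfl fun j _ => hterm j,
            Finset.sum_ite_eq' (Finset.range d) (k.val/2) (fun j => a * xx j),
            if_pos (Finset.mem_range.mpr (by omega))]
        rw [hsum]
        show max 0 (a * xx (k.val/2) + Gb (M:ℝ) s a a' yy 0 k.val) = U k.val
        rw [hU]; dsimp only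
        rw [if_pos hk]
        by_cases hpar : k.val % 2 = 0
        · rw [show Gb (M:ℝ) s a a' yy 0 k.val = a*(1/(M:ℝ) - yy (k.val/2)) by
            simp [Gb, if_pos hk, if_pos hpar], if_pos hpar, ← hmaxa]
          congr 1; ring
        · rw [show Gb (M:ℝ) s a a' yy 0 k.val = -(a * yy (k.val/2)) by
            simp [Gb, if_pos hk, if_neg hpar], if_neg hpar, ← hmaxa]
          congr 1; ring
      · have hsum : (∑ j ∈ Finset.range d, Fw (K+3) s a w w'' ν c 0 k.val j * xx j) = 0 := by
          have hterm : ∀ j, Fw (K+3) s a w w'' ν c 0 k.val j * xx j = 0 := by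
            intro j; simp [Fw, hk]
          rw [Finset.sum_congr rfl fun j _ => hterm j]
          exact Finset.sum_const_zero
        rw [hsum]
        show max 0 (0 + Gb (M:ℝ) s a a' yy 0 k.val) = U k.val
        rw [hU]; dsimp only
        rw [zero_add, if_neg hk]
        by_cases hk2 : k.val = 2*s
        · rw [show Gb (M:ℝ) s a a' yy 0 k.val = a' by simp [Gb, if_neg hk, if_pos hk2],
            if_pos hk2, max_eq_right ha'.le]
        · rw [show Gb (M:ℝ) s a a' yy 0 k.val = 0 by simp [Gb, if_neg hk, if_neg hk2],
            if_neg hk2]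
          exact max_eq_right le_rfl
    -- theta via range sums
    have hth : theta d s (M:ℝ) y x
        = max 0 ((∑ i ∈ Finset.range s, Lam (M:ℝ) (yy i) (xx i)) - ((s:ℝ)-1)) := by
      rw [theta]
      congr 2
      rw [Finset.sum_filter,
        fin_sum_eq d _ (fun n => if n < s then Lam (M:ℝ) (yy n) (xx n) else 0)
          (fun j => by rw [hyv j, hxv j]),
        ← Finset.sum_subset (Finset.range_subset_range.mpr hsd)
          (fun n _ hn => if_neg (by simpa using hn))]
      exact Finset.sum_congr rfl fun n hn => if_pos (Finset.mem_range.mp hn)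
    set T : ℝ := w * a / (M:ℝ) * theta d s (M:ℝ) y x with hTdef
    have hT0 : 0 ≤ T := by
      rw [hTdef]
      exact mul_nonneg (by positivity) hθ0
    -- layer 2
    have hlay2 : ∀ k : Fin (Narch d B (K+3) 2),
        layers (Narch d B (K+3)) Wmat bvec 2 x k = if k.val = 0 then T else 0 := by
      intro k
      show max 0 ((Wmat 1).mulVec (layers (Narch d B (K+3)) Wmat bvec 1 x) k
        + bvec 1 k) = _
      have hb1 : bvec 1 k = 0 := by simp [hbvec, Gb]
      have hmv : (Wmat 1).mulVec (layers (Narch d B (K+3)) Wmat bvec 1 x) k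
          = ∑ j ∈ Finset.range (Narch d B (K+3) 1),
              Fw (K+3) s a w w'' ν c 1 k.val j * U j := by
        simp only [Matrix.mulVec, dotProduct]
        exact fin_sum_eq _ _ _ (fun j => by rw [hlay1 j])
      rw [hmv, hb1, add_zero, hNB 1 one_ne_zero (by omega)]
      by_cases hk : k.val = 0
      · rw [if_pos hk, hk]
        have hred : (∑ j ∈ Finset.range B, Fw (K+3) s a w w'' ν c 1 0 j * U j)
            = (∑ j ∈ Finset.range (2*s), Fw (K+3) s a w w'' ν c 1 0 j * U j)
              + Fw (K+3) s a w w'' ν c 1 0 (2*s) * U (2*s) := by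
          rw [← Finset.sum_subset (Finset.range_subset_range.mpr (by omega : 2*s+1 ≤ B))
            (fun n _ hn => by
              have h1 : ¬ n < 2*s := by simp at hn; omega
              have h2 : ¬ n = 2*s := by simp at hn; omega
              simp [Fw, if_neg h1, if_neg h2]),
            Finset.sum_range_succ]
        have hlast : Fw (K+3) s a w w'' ν c 1 0 (2*s) * U (2*s) = -(w'' * a') := by
          have h1 : ¬ 2*s < 2*s := by omega
          rw [show Fw (K+3) s a w w'' ν c 1 0 (2*s) = -w'' by simp [Fw, if_neg h1],
            show U (2*s) = a' by rw [hU]; dsimp only; rw [if_neg h1, if_pos rfl]]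
          ring
        have hpair : ∀ i ∈ Finset.range s,
            (Fw (K+3) s a w w'' ν c 1 0 (2*i) * U (2*i)
              + Fw (K+3) s a w w'' ν c 1 0 (2*i+1) * U (2*i+1))
            = w * a / (M:ℝ) * Lam (M:ℝ) (yy i) (xx i) := by
          intro i hi
          have his := Finset.mem_range.mp hi
          have t1 : 2*i < 2*s := by omega
          have t1' : 2*i+1 < 2*s := by omega
          have t2 : (2*i) % 2 = 0 := by omega
          have t2' : ¬ (2*i+1) % 2 = 0 := by omega
          have t3 : (2*i)/2 = i := by omega
          have t3' : (2*i+1)/2 = i := by omega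
          rw [show Fw (K+3) s a w w'' ν c 1 0 (2*i) = w by
              simp only [Fw, if_true]
              rw [if_pos t1, if_pos t2, if_neg (by omega : ¬ (1:ℕ) = 0)],
            show Fw (K+3) s a w w'' ν c 1 0 (2*i+1) = -(2*w) by
              simp only [Fw, if_true]
              rw [if_pos t1', if_neg t2', if_neg (by omega : ¬ (1:ℕ) = 0)],
            show U (2*i) = a * max 0 (xx i - yy i + 1/(M:ℝ)) by
              rw [hU]; dsimp only; rw [if_pos t1, if_pos t2, t3],
            show U (2*i+1) = a * max 0 (xx i - yy i) by
              rw [hU]; dsimp only; rw [if_pos t1', if_neg t2', t3', add_zero],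
            lam_eq _ _ _ hMR]
          field_simp
          ring
        rw [hred, hlast, sum_range_two_mul
            (fun j => Fw (K+3) s a w w'' ν c 1 0 j * U j) s,
          Finset.sum_congr rfl hpair, ← Finset.mul_sum]
        have hw''a' : w'' * a' = w * a * ((s:ℝ)-1) / (M:ℝ) := by
          rw [hw''_def]
          field_simp
        rw [hw''a', hTdef, hth]
        have hC : (0:ℝ) ≤ w * a / (M:ℝ) := by positivity
        rw [mul_max_of_nonneg _ _ hC, mul_zero]
        congr 1
        ring
      · rw [if_neg hk]
        have hterm : ∀ j ∈ Finset.range B, Fw (K+3) s a w w'' ν c 1 k.val j * U j = 0 := by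
          intro j _; simp [Fw, if_neg hk]
        rw [Finset.sum_congr rfl hterm, Finset.sum_const_zero]
        exact max_eq_right le_rfl
    -- middle layers
    have hlayM : ∀ m, m + 2 ≤ K + 2 → ∀ k : Fin (Narch d B (K+3) (m+2)),
        layers (Narch d B (K+3)) Wmat bvec (m+2) x k
          = if k.val = 0 then c^m * T else 0 := by
      intro m
      induction m with
      | zero =>
          intro _ k
          rw [pow_zero, one_mul]
          exact hlay2 k
      | succ m ih =>
          intro hm k
          show max 0 ((Wmat (m+2)).mulVec (layers (Narch d B (K+3)) Wmat bvec (m+2) x) k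
            + bvec (m+2) k) = _
          have hb : bvec (m+2) k = 0 := by simp [hbvec, Gb]
          have hFm : ∀ kk jj : ℕ, Fw (K+3) s a w w'' ν c (m+2) kk jj
              = if kk = 0 ∧ jj = 0 then c else 0 := by
            intro kk jj
            simp only [Fw]
            rw [if_neg (by omega : ¬ m+2 = 0), if_neg (by omega : ¬ m+2 = 1),
              if_neg (by omega : ¬ m+2 = K+3-1), if_pos (by omega : m+2 < K+3-1)]
          have hmv : (Wmat (m+2)).mulVec (layers (Narch d B (K+3)) Wmat bvec (m+2) x) k
              = ∑ j ∈ Finset.range (Narch d B (K+3) (m+2)),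
                  (if k.val = 0 ∧ j = 0 then c else 0) * (if j = 0 then c^m*T else 0) := by
            simp only [Matrix.mulVec, dotProduct]
            refine fin_sum_eq _ _ _ (fun j => ?_)
            rw [show (Wmat (m+2)) k j = (if k.val = 0 ∧ (j:ℕ) = 0 then c else 0) from
              hFm k.val j.val, ih (by omega) j]
          rw [hmv, hb, add_zero]
          have hterm : ∀ j ∈ Finset.range (Narch d B (K+3) (m+2)),
              (if k.val = 0 ∧ j = 0 then c else 0) * (if j = 0 then c^m*T else 0)
                = if j = 0 then (if k.val = 0 then c^(m+1)*T else 0) else 0 := by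
            intro j _
            by_cases hj : j = 0 <;> by_cases hk : k.val = 0 <;>
              simp [hj, hk] <;> ring
          rw [Finset.sum_congr rfl hterm,
            Finset.sum_ite_eq' (Finset.range (Narch d B (K+3) (m+2))) 0
              (fun _ => (if k.val = 0 then c^(m+1)*T else 0)),
            if_pos (Finset.mem_range.mpr (hNpos _))]
          by_cases hk : k.val = 0
          · rw [if_pos hk]
            exact max_eq_right (mul_nonneg (pow_nonneg hc.le _) hT0)
          · rw [if_neg hk]
            exact max_eq_right le_rfl
    -- final layer
    funext j
    show (Wmat (K+2)).mulVec (layers (Narch d B (K+3)) Wmat bvec (K+2) x) j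
        + bvec (K+2) j
      = ν * (c ^ (K+3) * (s:ℝ) ^ (1 - 2/q) / (2 * 3 ^ (2/q))) / ((M:ℝ) * s)
        * theta d s (M:ℝ) y x
    have hN1' : Narch d B (K+3) (K+3) = 1 := by
      unfold Narch
      rw [if_neg (by omega), if_neg (by omega)]
    have hjv : j.val = 0 := by
      have h1 := j.isLt
      have h2 : Narch d B (K+3) (K+3) ≤ 1 := le_of_eq hN1'
      omega
    have hb : bvec (K+2) j = 0 := by simp [hbvec, Gb]
    have hFlast : ∀ kk jj : ℕ, Fw (K+3) s a w w'' ν c (K+2) kk jj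
        = if kk = 0 ∧ jj = 0 then ν*c else 0 := by
      intro kk jj
      simp only [Fw]
      rw [if_neg (by omega : ¬ K+2 = 0), if_neg (by omega : ¬ K+2 = 1),
        if_pos (by omega : K+2 = K+3-1)]
    have hmv : (Wmat (K+2)).mulVec (layers (Narch d B (K+3)) Wmat bvec (K+2) x) j
        = ∑ j' ∈ Finset.range (Narch d B (K+3) (K+2)),
            (if j.val = 0 ∧ j' = 0 then ν*c else 0) * (if j' = 0 then c^K*T else 0) := by
      simp only [Matrix.mulVec, dotProduct]
      refine fin_sum_eq _ _ _ (fun j' => ?_)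
      rw [show (Wmat (K+2)) j j' = (if j.val = 0 ∧ (j':ℕ) = 0 then ν*c else 0) from
        hFlast j.val j'.val, hlayM K le_rfl j']
    rw [hmv, hb, add_zero]
    have hterm : ∀ j' ∈ Finset.range (Narch d B (K+3) (K+2)),
        (if j.val = 0 ∧ j' = 0 then ν*c else 0) * (if j' = 0 then c^K*T else 0)
          = if j' = 0 then ν*c*(c^K*T) else 0 := by
      intro j' _
      by_cases hj : j' = 0 <;> simp [hj, hjv]
    rw [Finset.sum_congr rfl hterm,
      Finset.sum_ite_eq' (Finset.range (Narch d B (K+3) (K+2))) 0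
        (fun _ => ν*c*(c^K*T)),
      if_pos (Finset.mem_range.mpr (hNpos _)), hTdef]
    -- coefficient identity
    have hs2q : (0:ℝ) < (s:ℝ) ^ (2/q) := Real.rpow_pos_of_pos hsp _
    have h32q : (0:ℝ) < (3:ℝ) ^ (2/q) := Real.rpow_pos_of_pos (by norm_num) _
    have h1 : (s:ℝ) ^ (1 - 2/q) = (s:ℝ) / (s:ℝ) ^ (2/q) := by
      rw [Real.rpow_sub hsp, Real.rpow_one]
    have h2 : P * P = (3:ℝ) ^ (2/q) * (s:ℝ) ^ (2/q) := by
      have e : P * P = ((3:ℝ)*(s:ℝ)) ^ (2/q) := by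
        rw [hPdef, ← Real.rpow_add h3s]
        congr 1
        ring
      rw [e, Real.mul_rpow (by norm_num) hsp.le]
    calc ν*c*(c^K*(w * a / (M:ℝ) * theta d s (M:ℝ) y x))
        = ν * c^(K+3) / (2*(P*P)*(M:ℝ)) * theta d s (M:ℝ) y x := by
          rw [hw_def, ha_def]
          field_simp
          ring
    _ = ν * (c ^ (K+3) * (s:ℝ) ^ (1 - 2/q) / (2 * 3 ^ (2/q))) / ((M:ℝ) * s)
          * theta d s (M:ℝ) y x := by
          rw [h2, h1]
          field_simp
end
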